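/- arXiv:1304.4378 — 2 statements merged into one kernel-verified Lean document; each statement's English description precedes it below -/
import Mathlib

section
/- Let A be a synaptic algebra with projection lattice P. If the projections e,f ∈ P are complements of each other in P (e ∧ f = 0 and e ∨ f = 1) and s ∈ A is a symmetry exchanging e and f, then e and f are perspective in P; in fact, the projection p := (1 + s)/2 ∈ P corresponding to s is a common complement of both e and f. -/
/-- For subsets `A, B` of a ring `R`, the commutant of `B` within `A`:
`C(B) = {x ∈ A : x b = b x for all b ∈ B}`. -/
def SynComm {R : Type*} [Ring R] (A : Set R) (B : Set R) : Set R :=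
  {x | x ∈ A ∧ ∀ b ∈ B, x * b = b * x}

/-- A synaptic algebra: a real vector subspace `A` of a real linear associative
algebra `R` with unity, satisfying axioms SA1–SA8 of Foulis.  The partial order
is recorded as a relation `le` on `R`, whose axioms are imposed on elements of
`A`; `1` is an order unit, the order is archimedean, and the norm convergence
occurring in SA8 is expressed via the order-unit characterization
`‖a‖ ≤ ε ↔ -ε•1 ≤ a ≤ ε•1`. -/
structure SynapticAlgebra (R : Type*) [Ring R] [Algebra ℝ R] where
  A : Set R
  zero_mem : (0 : R) ∈ A
  one_mem : (1 : R) ∈ A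
  add_mem : ∀ {a b : R}, a ∈ A → b ∈ A → a + b ∈ A
  smul_mem : ∀ (r : ℝ) {a : R}, a ∈ A → r • a ∈ A
  /-- the partial order on `A` (SA1) -/
  le : R → R → Prop
  le_refl : ∀ a ∈ A, le a a
  le_trans : ∀ a ∈ A, ∀ b ∈ A, ∀ c ∈ A, le a b → le b c → le a c
  le_antisymm : ∀ a ∈ A, ∀ b ∈ A, le a b → le b a → a = b
  add_le_add : ∀ a ∈ A, ∀ b ∈ A, ∀ c ∈ A, le a b → le (a + c) (b + c)
  smul_nonneg : ∀ (r : ℝ), 0 ≤ r → ∀ a ∈ A, le 0 a → le 0 (r • a)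
  /-- SA1: the ordered vector space `A` is archimedean -/
  archimedean : ∀ a ∈ A, ∀ b ∈ A, (∀ n : ℕ, le (n • a) b) → le a 0
  /-- SA1: `1` is an order unit for `A` -/
  orderUnit : ∀ a ∈ A, ∃ r : ℝ, le a (r • (1 : R))
  /-- SA2 (together with closure of `A` under squaring) -/
  sq_mem : ∀ a ∈ A, a * a ∈ A
  sq_nonneg : ∀ a ∈ A, le 0 (a * a)
  /-- SA3 -/
  SA3 : ∀ a ∈ A, ∀ b ∈ A, le 0 a → le 0 b → le 0 (a * b * a)
  /-- SA4 -/
  SA4 : ∀ a ∈ A, ∀ b ∈ A, le 0 b → a * b * a = 0 → a * b = 0 ∧ b * a = 0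
  /-- SA5: positive elements have square roots in `CC(a)` -/
  SA5 : ∀ a ∈ A, le 0 a →
    ∃ b ∈ SynComm A (SynComm A {a}), le 0 b ∧ b * b = a
  /-- SA6: existence of carrier projections -/
  SA6 : ∀ a ∈ A, ∃ p ∈ A, p * p = p ∧ ∀ b ∈ A, (a * b = 0 ↔ p * b = 0)
  /-- SA7: elements above `1` are invertible -/
  SA7 : ∀ a ∈ A, le 1 a → ∃ b ∈ A, a * b = 1 ∧ b * a = 1
  /-- SA8: commutants are closed under norm limits of ascending commuting sequences -/
  SA8 : ∀ a ∈ A, ∀ b ∈ A, ∀ f : ℕ → R, (∀ n, f n ∈ A) →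
    (∀ n, f n * b = b * f n) → (∀ n m, f n * f m = f m * f n) →
    (∀ n, le (f n) (f (n + 1))) →
    (∀ ε : ℝ, 0 < ε → ∃ N : ℕ, ∀ n ≥ N,
        le (a - f n) (ε • (1 : R)) ∧ le ((-ε) • (1 : R)) (a - f n)) →
    a * b = b * a
  /-- non-degeneracy: `0 ≠ 1` -/
  nondegenerate : (0 : R) ≠ 1

namespace SynapticAlgebra

variable {R : Type*} [Ring R] [Algebra ℝ R] (S : SynapticAlgebra R)

/-- The set `P` of projections of the synaptic algebra. -/
def Proj : Set R := {p | p ∈ S.A ∧ p * p = p}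

/-- A symmetry: an element `s ∈ A` with `s² = 1`. -/
def IsSymmetry (s : R) : Prop := s ∈ S.A ∧ s * s = 1

/-- Projections `e` and `f` are exchanged by a symmetry. -/
def ExchBySym (e f : R) : Prop := ∃ s, S.IsSymmetry s ∧ s * e * s = f

/-- `p ∼ q`: equivalence of projections induced by finite sequences of
symmetries, i.e. `q = sₙ ⋯ s₁ p s₁ ⋯ sₙ`. -/
def Equiv (p q : R) : Prop := Relation.ReflTransGen S.ExchBySym p q

/-- `p` and `q` are related: they have nonzero equivalent subprojections. -/
def Related (p q : R) : Prop :=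
  ∃ p₁ ∈ S.Proj, ∃ q₁ ∈ S.Proj, p₁ ≠ 0 ∧ q₁ ≠ 0 ∧
    S.le p₁ p ∧ S.le q₁ q ∧ S.Equiv p₁ q₁

/-- `p ≼ q`: `p` is equivalent to a subprojection of `q`. -/
def SubEquiv (p q : R) : Prop := ∃ q₁ ∈ S.Proj, S.le q₁ q ∧ S.Equiv p q₁

/-- `c` commutes with every element of `A` (so a projection `c` with this
property is a central projection, `c ∈ P ∩ C(A)`). -/
def IsCentral (c : R) : Prop := ∀ a ∈ S.A, c * a = a * c

/-- `m = e ∧ f`, the infimum of `e` and `f` in the projection lattice `P`. -/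
def IsMeet (e f m : R) : Prop :=
  m ∈ S.Proj ∧ S.le m e ∧ S.le m f ∧
    ∀ r ∈ S.Proj, S.le r e → S.le r f → S.le r m

/-- `j = e ∨ f`, the supremum of `e` and `f` in the projection lattice `P`. -/
def IsJoin (e f j : R) : Prop :=
  j ∈ S.Proj ∧ S.le e j ∧ S.le f j ∧
    ∀ r ∈ S.Proj, S.le e r → S.le f r → S.le j r

/-- `m = ⋁ Q`, the supremum of the set `Q` in the projection lattice `P`. -/
def IsSupOf (Q : Set R) (m : R) : Prop :=
  m ∈ S.Proj ∧ (∀ q ∈ Q, S.le q m) ∧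
    ∀ b ∈ S.Proj, (∀ q ∈ Q, S.le q b) → S.le m b

/-- `m = ⋀ Q`, the infimum of the set `Q` in the projection lattice `P`. -/
def IsInfOf (Q : Set R) (m : R) : Prop :=
  m ∈ S.Proj ∧ (∀ q ∈ Q, S.le m q) ∧
    ∀ b ∈ S.Proj, (∀ q ∈ Q, S.le b q) → S.le b m

/-- The projection lattice `P` is a complete lattice: every subset of `P`
has a supremum and an infimum in `P`. -/
def ProjComplete : Prop :=
  ∀ Q ⊆ S.Proj, (∃ m, S.IsSupOf Q m) ∧ (∃ m, S.IsInfOf Q m)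

/-- The projection lattice `P` is centrally orthocomplete: every family of
projections dominated by a pairwise orthogonal family of central projections
has a supremum in `P`. -/
def CentrallyOrthocomplete : Prop :=
  ∀ Q ⊆ S.Proj, ∀ c : R → R,
    (∀ q ∈ Q, c q ∈ S.Proj ∧ S.IsCentral (c q) ∧ S.le q (c q)) →
    (∀ q ∈ Q, ∀ q' ∈ Q, q ≠ q' → c q * c q' = 0) →
    ∃ m, S.IsSupOf Q m

/-- `c = γ p`: `c` is the central cover of `p`, the smallest central
projection dominating `p`. -/
def IsCentralCover (p c : R) : Prop :=
  c ∈ S.Proj ∧ S.IsCentral c ∧ S.le p c ∧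
    ∀ d ∈ S.Proj, S.IsCentral d → S.le p d → S.le c d

/-- `x = φ_e(f) = e ∧ (e^⊥ ∨ f)`, the Sasaki projection of `f` determined
by `e`, in the projection lattice `P` (where `e^⊥ = 1 - e`). -/
def IsSasaki (e f x : R) : Prop :=
  ∃ j, S.IsJoin (1 - e) f j ∧ S.IsMeet e j x

/-- Mackey compatibility of projections `p` and `q` in the OML `P`:
there are pairwise orthogonal projections `p₁, q₁, d` with `p = p₁ ∨ d = p₁ + d`
and `q = q₁ ∨ d = q₁ + d` (orthogonal projections satisfy `pq = qp = 0` and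
their join is their sum). -/
def Compatible (p q : R) : Prop :=
  ∃ p₁ ∈ S.Proj, ∃ q₁ ∈ S.Proj, ∃ d ∈ S.Proj,
    p₁ * q₁ = 0 ∧ q₁ * p₁ = 0 ∧ p₁ * d = 0 ∧ d * p₁ = 0 ∧
    q₁ * d = 0 ∧ d * q₁ = 0 ∧ p = p₁ + d ∧ q = q₁ + d

end SynapticAlgebra

section Aux

variable {R : Type*} [Ring R] [Algebra ℝ R] (S : SynapticAlgebra R)

lemma syn_neg_mem {a : R} (ha : a ∈ S.A) : -a ∈ S.A := by
  have := S.smul_mem (-1) ha; simpa using this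

lemma syn_sub_mem {a b : R} (ha : a ∈ S.A) (hb : b ∈ S.A) : a - b ∈ S.A := by
  have := S.add_mem ha (syn_neg_mem S hb); simpa [sub_eq_add_neg] using this

lemma syn_jordan_mem {a b : R} (ha : a ∈ S.A) (hb : b ∈ S.A) :
    a * b + b * a ∈ S.A := by
  have h := syn_sub_mem S (syn_sub_mem S (S.sq_mem _ (S.add_mem ha hb))
    (S.sq_mem _ ha)) (S.sq_mem _ hb)
  have heq : (a + b) * (a + b) - a * a - b * b = a * b + b * a := by noncomm_ring
  rwa [heq] at h

lemma syn_triple_mem {a b : R} (ha : a ∈ S.A) (hb : b ∈ S.A) :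
    a * b * a ∈ S.A := by
  set u := a * b + b * a with hu
  have hX : u * a + a * u - (a * a * b + b * (a * a)) ∈ S.A :=
    syn_sub_mem S (syn_jordan_mem S (syn_jordan_mem S ha hb) ha)
      (syn_jordan_mem S (S.sq_mem _ ha) hb)
  have heq : u * a + a * u - (a * a * b + b * (a * a)) = a * b * a + a * b * a := by
    rw [hu]; noncomm_ring
  rw [heq] at hX
  have h2 : a * b * a = (2⁻¹ : ℝ) • (a * b * a + a * b * a) := by
    rw [← two_smul ℝ (a * b * a), smul_smul]; norm_num
  rw [h2]
  exact S.smul_mem _ hX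

lemma syn_sub_nonneg_of_le {a b : R} (ha : a ∈ S.A) (hb : b ∈ S.A)
    (h : S.le a b) : S.le 0 (b - a) := by
  have := S.add_le_add a ha b hb (-a) (syn_neg_mem S ha) h
  rwa [add_neg_cancel, ← sub_eq_add_neg] at this

lemma syn_le_of_sub_nonneg {a b : R} (ha : a ∈ S.A) (hb : b ∈ S.A)
    (h : S.le 0 (b - a)) : S.le a b := by
  have := S.add_le_add 0 S.zero_mem (b - a) (syn_sub_mem S hb ha) a ha h
  rwa [zero_add, sub_add_cancel] at this

lemma syn_le_of_sub_eq {a b c d : R} (ha : a ∈ S.A) (hb : b ∈ S.A)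
    (hc : c ∈ S.A) (hd : d ∈ S.A) (h : S.le a b) (heq : b - a = d - c) :
    S.le c d := by
  apply syn_le_of_sub_nonneg S hc hd
  rw [← heq]
  exact syn_sub_nonneg_of_le S ha hb h

lemma syn_proj_nonneg {p : R} (hp : p ∈ S.Proj) : S.le 0 p := by
  have := S.sq_nonneg p hp.1; rwa [hp.2] at this

lemma syn_one_sub_proj {p : R} (hp : p ∈ S.Proj) : (1 - p) ∈ S.Proj := by
  refine ⟨syn_sub_mem S S.one_mem hp.1, ?_⟩
  have : (1 - p) * (1 - p) = 1 - p - p + p * p := by noncomm_ring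
  rw [this, hp.2]; abel

lemma syn_proj_le_one {p : R} (hp : p ∈ S.Proj) : S.le p 1 := by
  apply syn_le_of_sub_nonneg S hp.1 S.one_mem
  exact syn_proj_nonneg S (syn_one_sub_proj S hp)

lemma syn_le_of_mul {r q : R} (hr : r ∈ S.Proj) (hq : q ∈ S.Proj)
    (h1 : q * r = r) (h2 : r * q = r) : S.le r q := by
  apply syn_le_of_sub_nonneg S hr.1 hq.1
  have heq : (q - r) * (q - r) = q * q - q * r - r * q + r * r := by noncomm_ring
  have := S.sq_nonneg (q - r) (syn_sub_mem S hq.1 hr.1)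
  rw [heq, hq.2, hr.2, h1, h2] at this
  have h3 : q - r - r + r = q - r := by abel
  rwa [h3] at this

lemma syn_mul_of_le {r q : R} (hr : r ∈ S.Proj) (hq : q ∈ S.Proj)
    (h : S.le r q) : q * r = r ∧ r * q = r := by
  set q' := 1 - q with hq'
  have hq'p : q' ∈ S.Proj := syn_one_sub_proj S hq
  have ht : q' * r * q' ∈ S.A := syn_triple_mem S hq'p.1 hr.1
  have h1 : S.le 0 (q' * r * q') :=
    S.SA3 q' hq'p.1 r hr.1 (syn_proj_nonneg S hq'p) (syn_proj_nonneg S hr)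
  have h2 : S.le 0 (q' * (q - r) * q') :=
    S.SA3 q' hq'p.1 (q - r) (syn_sub_mem S hq.1 hr.1) (syn_proj_nonneg S hq'p)
      (syn_sub_nonneg_of_le S hr.1 hq.1 h)
  have hq'q : (1 - q) * q = 0 := by rw [sub_mul, one_mul, hq.2, sub_self]
  have heq : q' * (q - r) * q' = -(q' * r * q') := by
    have hexp : (1 - q) * (q - r) * (1 - q)
        = (1 - q) * q * (1 - q) - (1 - q) * r * (1 - q) := by noncomm_ring
    rw [hq', hexp, hq'q, zero_mul, zero_sub]
  rw [heq] at h2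
  have h3 : S.le (q' * r * q') 0 := by
    have := S.add_le_add 0 S.zero_mem _ (syn_neg_mem S ht) (q' * r * q')
      ht h2
    rwa [zero_add, neg_add_cancel] at this
  have h0 : q' * r * q' = 0 := S.le_antisymm _ ht _ S.zero_mem h3 h1
  have := S.SA4 q' hq'p.1 r hr.1 (syn_proj_nonneg S hr) h0
  obtain ⟨ha, hb⟩ := this
  rw [hq', sub_mul, one_mul, sub_eq_zero] at ha
  rw [hq', mul_sub, mul_one, sub_eq_zero] at hb
  exact ⟨ha.symm, hb.symm⟩

lemma syn_sym_proj {s : R} (hs : S.IsSymmetry s) :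
    ((2⁻¹ : ℝ) • (1 + s)) ∈ S.Proj := by
  refine ⟨S.smul_mem _ (S.add_mem S.one_mem hs.1), ?_⟩
  rw [smul_mul_assoc, mul_smul_comm, smul_smul]
  have h1 : (1 + s) * (1 + s) = (2 : ℝ) • (1 + s) := by
    have : (1 + s) * (1 + s) = 1 + s + s + s * s := by noncomm_ring
    rw [this, hs.2, two_smul]; abel
  rw [h1, smul_smul]
  norm_num

/-- Core lemma: if `s` exchanges `e, f`, `e ∧ f = 0`, then any projection
below both `e` and `p = (1+s)/2` is `≤ 0`. -/
lemma syn_core {e f s : R} (he : e ∈ S.Proj) (hf : f ∈ S.Proj)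
    (hs : S.IsSymmetry s) (hx : s * e * s = f)
    (hm : ∀ r ∈ S.Proj, S.le r e → S.le r f → S.le r 0)
    (r : R) (hr : r ∈ S.Proj) (hre : S.le r e)
    (hrp : S.le r ((2⁻¹ : ℝ) • (1 + s))) : S.le r 0 := by
  have hp : ((2⁻¹ : ℝ) • (1 + s)) ∈ S.Proj := syn_sym_proj S hs
  obtain ⟨her, hre'⟩ := syn_mul_of_le S hr he hre
  obtain ⟨hpr, hrp'⟩ := syn_mul_of_le S hr hp hrp
  -- s * r = r
  have hsr : s * r = r := by
    rw [smul_mul_assoc] at hpr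
    have h2 : (2 : ℝ) • ((2⁻¹ : ℝ) • ((1 + s) * r)) = (2 : ℝ) • r := by rw [hpr]
    rw [smul_smul] at h2
    norm_num at h2
    have h3 : (1 + s) * r = r + s * r := by noncomm_ring
    rw [h3, two_smul] at h2
    exact add_left_cancel h2
  have hrs : r * s = r := by
    rw [mul_smul_comm] at hrp'
    have h2 : (2 : ℝ) • ((2⁻¹ : ℝ) • (r * (1 + s))) = (2 : ℝ) • r := by rw [hrp']
    rw [smul_smul] at h2
    norm_num at h2
    have h3 : r * (1 + s) = r + r * s := by noncomm_ring
    rw [h3, two_smul] at h2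
    exact add_left_cancel h2
  have hfr : f * r = r := by
    rw [← hx, mul_assoc, mul_assoc, hsr, ← mul_assoc, mul_assoc, her, hsr]
  have hrf : r * f = r := by
    rw [← hx, ← mul_assoc, ← mul_assoc, hrs, hre', hrs]
  exact hm r hr hre (syn_le_of_mul S hr hf hfr hrf)

end Aux


/-- Lemma 5.10: if `e` and `f` are complements in `P` (`e ∧ f = 0`,
`e ∨ f = 1`) and the symmetry `s` exchanges `e` and `f`, then the projection
`p := (1 + s)/2` corresponding to `s` is a common complement of both `e` and
`f`; in particular `e` and `f` are perspective in `P`. -/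
theorem stmt9 {R : Type*} [Ring R] [Algebra ℝ R] (S : SynapticAlgebra R)
    (e f s : R) (he : e ∈ S.Proj) (hf : f ∈ S.Proj)
    (hmeet : S.IsMeet e f 0) (hjoin : S.IsJoin e f 1)
    (hs : S.IsSymmetry s) (hx : s * e * s = f) :
    ((2⁻¹ : ℝ) • (1 + s)) ∈ S.Proj ∧
    S.IsMeet e ((2⁻¹ : ℝ) • (1 + s)) 0 ∧ S.IsJoin e ((2⁻¹ : ℝ) • (1 + s)) 1 ∧
    S.IsMeet f ((2⁻¹ : ℝ) • (1 + s)) 0 ∧ S.IsJoin f ((2⁻¹ : ℝ) • (1 + s)) 1 := by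
  set p := (2⁻¹ : ℝ) • (1 + s) with hpdef
  have hp : p ∈ S.Proj := syn_sym_proj S hs
  have hzero : (0 : R) ∈ S.Proj := ⟨S.zero_mem, by rw [mul_zero]⟩
  have hone : (1 : R) ∈ S.Proj := ⟨S.one_mem, by rw [mul_one]⟩
  have hxf : s * f * s = e := by
    rw [← hx]
    have h1 : s * (s * e * s) * s = s * s * e * (s * s) := by noncomm_ring
    rw [h1, hs.2, one_mul, mul_one]
  have hs' : S.IsSymmetry (-s) := ⟨syn_neg_mem S hs.1, by rw [neg_mul_neg, hs.2]⟩
  have he' := syn_one_sub_proj S he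
  have hf' := syn_one_sub_proj S hf
  have hx' : (-s) * (1 - e) * (-s) = 1 - f := by
    have h1 : (-s) * (1 - e) * (-s) = s * s - s * e * s := by noncomm_ring
    rw [h1, hs.2, hx]
  have hx'' : (-s) * (1 - f) * (-s) = 1 - e := by
    have h1 : (-s) * (1 - f) * (-s) = s * s - s * f * s := by noncomm_ring
    rw [h1, hs.2, hxf]
  have hp' : (2⁻¹ : ℝ) • (1 + -s) = 1 - p := by
    rw [hpdef, eq_sub_iff_add_eq, ← smul_add]
    have h1 : (1 + -s) + (1 + s) = (2 : ℝ) • (1 : R) := by rw [two_smul]; abel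
    rw [h1, smul_smul]
    norm_num
  -- the meet-zero property for 1-e, 1-f, coming from hjoin
  have hm' : ∀ r ∈ S.Proj, S.le r (1 - e) → S.le r (1 - f) → S.le r 0 := by
    intro r hr h1 h2
    have hr' := syn_one_sub_proj S hr
    obtain ⟨he1, he2⟩ := syn_mul_of_le S hr he' h1
    obtain ⟨hf1, hf2⟩ := syn_mul_of_le S hr hf' h2
    rw [sub_mul, one_mul, sub_eq_self] at he1
    rw [mul_sub, mul_one, sub_eq_self] at he2
    rw [sub_mul, one_mul, sub_eq_self] at hf1
    rw [mul_sub, mul_one, sub_eq_self] at hf2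
    have hle : S.le e (1 - r) := by
      apply syn_le_of_mul S he hr'
      · rw [sub_mul, one_mul, he2, sub_zero]
      · rw [mul_sub, mul_one, he1, sub_zero]
    have hlf : S.le f (1 - r) := by
      apply syn_le_of_mul S hf hr'
      · rw [sub_mul, one_mul, hf2, sub_zero]
      · rw [mul_sub, mul_one, hf1, sub_zero]
    have h3 := hjoin.2.2.2 (1 - r) hr' hle hlf
    exact syn_le_of_sub_eq S S.one_mem hr'.1 hr.1 S.zero_mem h3 (by abel)
  -- meet-zero for f, e
  have hm : ∀ r ∈ S.Proj, S.le r e → S.le r f → S.le r 0 := hmeet.2.2.2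
  have hmfe : ∀ r ∈ S.Proj, S.le r f → S.le r e → S.le r 0 :=
    fun r hr h1 h2 => hm r hr h2 h1
  have hm'' : ∀ r ∈ S.Proj, S.le r (1 - f) → S.le r (1 - e) → S.le r 0 :=
    fun r hr h1 h2 => hm' r hr h2 h1
  -- join property: common upper bounds of q and p are ≥ 1, for q with the
  -- corresponding core data
  have joinpart : ∀ q q' : R, q ∈ S.Proj → q' ∈ S.Proj →
      ((-s) * (1 - q) * (-s) = 1 - q') →
      (∀ r ∈ S.Proj, S.le r (1 - q) → S.le r (1 - q') → S.le r 0) →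
      ∀ r ∈ S.Proj, S.le q r → S.le p r → S.le 1 r := by
    intro q q' hq hq' hxq hmq r hr h1 h2
    have hr' := syn_one_sub_proj S hr
    obtain ⟨hq1, hq2⟩ := syn_mul_of_le S hq hr h1
    obtain ⟨hp1, hp2⟩ := syn_mul_of_le S hp hr h2
    have hle1 : S.le (1 - r) (1 - q) := by
      apply syn_le_of_mul S hr' (syn_one_sub_proj S hq)
      · have : (1 - q) * (1 - r) = 1 - r - q + q * r := by noncomm_ring
        rw [this, hq2]; abel
      · have : (1 - r) * (1 - q) = 1 - r - q + r * q := by noncomm_ring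
        rw [this, hq1]; abel
    have hle2 : S.le (1 - r) ((2⁻¹ : ℝ) • (1 + -s)) := by
      rw [hp']
      apply syn_le_of_mul S hr' (syn_one_sub_proj S hp)
      · have : (1 - p) * (1 - r) = 1 - r - p + p * r := by noncomm_ring
        rw [this, hp2]; abel
      · have : (1 - r) * (1 - p) = 1 - r - p + r * p := by noncomm_ring
        rw [this, hp1]; abel
    have hcore := syn_core S (syn_one_sub_proj S hq) (syn_one_sub_proj S hq')
      hs' hxq hmq (1 - r) hr' hle1 hle2
    have h0 : 1 - r = 0 := S.le_antisymm _ hr'.1 _ S.zero_mem hcore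
      (syn_proj_nonneg S hr')
    have : r = 1 := by
      have := sub_eq_zero.mp h0; exact this.symm
    rw [this]
    exact S.le_refl 1 S.one_mem
  refine ⟨hp, ?_, ?_, ?_, ?_⟩
  · exact ⟨hzero, syn_proj_nonneg S he, syn_proj_nonneg S hp,
      fun r hr h1 h2 => syn_core S he hf hs hx hm r hr h1 h2⟩
  · exact ⟨hone, syn_proj_le_one S he, syn_proj_le_one S hp,
      fun r hr h1 h2 => joinpart e f he hf hx' hm' r hr h1 h2⟩
  · exact ⟨hzero, syn_proj_nonneg S hf, syn_proj_nonneg S hp,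
      fun r hr h1 h2 => syn_core S hf he hs hxf hmfe r hr h1 h2⟩
  · exact ⟨hone, syn_proj_le_one S hf, syn_proj_le_one S hp,
      fun r hr h1 h2 => joinpart f e hf he hx'' hm'' r hr h1 h2⟩
end

section
/- Let A be a synaptic algebra with projection lattice P, and let e,f ∈ P. Then: (i) if e and f are perspective, then there are symmetries s₁,s₂ ∈ A with s₂s₁es₁s₂ = f; (ii) if e and f are orthogonal and there are symmetries s₁,s₂ ∈ A with s₂s₁es₁s₂ = f, then there is a single symmetry s ∈ A exchanging e and f; (iii) if e and f are both perspective and orthogonal, then there is a symmetry s ∈ A exchanging e and f. -/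
section Aux
set_option linter.unusedSectionVars false

variable {R : Type*} [Ring R] [Algebra ℝ R]

private lemma assoc_eq {x y z : R} (h : x * y = z) (w : R) : x * (y * w) = z * w := by
  rw [← mul_assoc, h]

private lemma half_smul (x : R) : (2:ℝ)⁻¹ • (x + x) = x := by
  rw [← two_smul ℝ x, ← mul_smul]
  norm_num

private lemma add_self_cancel {x y : R} (h : x + x = y + y) : x = y := by
  have := congrArg (fun z => (2:ℝ)⁻¹ • z) h
  change (2:ℝ)⁻¹ • (x + x) = (2:ℝ)⁻¹ • (y + y) at this
  rwa [half_smul, half_smul] at this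

private lemma four_cancel {x : R} (h : x + x + x + x = 0) : x = 0 := by
  have h2 : (x + x) + (x + x) = 0 + 0 := by rw [add_zero]; linear_combination (norm := abel) h
  have := add_self_cancel h2
  exact add_self_cancel (by rw [this]; abel)

namespace SynapticAlgebra

variable (S : SynapticAlgebra R)

private lemma neg_mem {a : R} (ha : a ∈ S.A) : -a ∈ S.A := by
  have := S.smul_mem (-1 : ℝ) ha
  rwa [neg_one_smul] at this

private lemma sub_mem {a b : R} (ha : a ∈ S.A) (hb : b ∈ S.A) : a - b ∈ S.A := by
  have := S.add_mem ha (S.neg_mem hb)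
  rwa [← sub_eq_add_neg] at this

private lemma jordan_mem {a b : R} (ha : a ∈ S.A) (hb : b ∈ S.A) : a * b + b * a ∈ S.A := by
  have h : a * b + b * a = (a + b) * (a + b) - a * a - b * b := by noncomm_ring
  rw [h]
  exact S.sub_mem (S.sub_mem (S.sq_mem _ (S.add_mem ha hb)) (S.sq_mem _ ha)) (S.sq_mem _ hb)

private lemma triple_mem {a b : R} (ha : a ∈ S.A) (hb : b ∈ S.A) : a * b * a ∈ S.A := by
  have hX : a * (a * b + b * a) + (a * b + b * a) * a ∈ S.A :=
    S.jordan_mem ha (S.jordan_mem ha hb)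
  have hY : (a * a) * b + b * (a * a) ∈ S.A := S.jordan_mem (S.sq_mem _ ha) hb
  have hD : (a * (a * b + b * a) + (a * b + b * a) * a) - ((a * a) * b + b * (a * a)) ∈ S.A :=
    S.sub_mem hX hY
  have hEq : (a * (a * b + b * a) + (a * b + b * a) * a) - ((a * a) * b + b * (a * a))
      = a * b * a + a * b * a := by noncomm_ring
  have := S.smul_mem ((2:ℝ)⁻¹) hD
  rwa [hEq, half_smul] at this

private lemma triple3_mem {a b c : R} (ha : a ∈ S.A) (hb : b ∈ S.A) (hc : c ∈ S.A) :
    a * b * c + c * b * a ∈ S.A := by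
  have h : a * b * c + c * b * a = (a + c) * b * (a + c) - a * b * a - c * b * c := by
    noncomm_ring
  rw [h]
  exact S.sub_mem (S.sub_mem (S.triple_mem (S.add_mem ha hc) hb) (S.triple_mem ha hb))
    (S.triple_mem hc hb)

/-- An element equal to its square is nonnegative. -/
private lemma idem_nonneg {q : R} (hq : q ∈ S.A) (h : q * q = q) : S.le 0 q := by
  have := S.sq_nonneg q hq
  rwa [h] at this

private lemma le_of_idem_diff {q r : R} (hq : q ∈ S.A) (hr : r ∈ S.A)
    (h : (r - q) * (r - q) = r - q) : S.le q r := by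
  have h0 : S.le 0 (r - q) := S.idem_nonneg (S.sub_mem hr hq) h
  have := S.add_le_add 0 S.zero_mem (r - q) (S.sub_mem hr hq) q hq h0
  rwa [zero_add, sub_add_cancel] at this

private lemma sq_zero {t : R} (ht : t ∈ S.A) (h : t * t = 0) : t = 0 := by
  have h1 : t * 1 * t = 0 := by rwa [mul_one]
  have := (S.SA4 t ht 1 S.one_mem (S.idem_nonneg S.one_mem (one_mul 1)) h1).1
  rwa [mul_one] at this

/-- From `m * a = 0` with `a ≥ 0` conclude `a * m = 0` as well. -/
private lemma zero_comm_of_nonneg {m a : R} (hm : m ∈ S.A) (ha : a ∈ S.A) (h0 : S.le 0 a)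
    (h : m * a = 0) : a * m = 0 := by
  have h1 : m * a * m = 0 := by rw [h, zero_mul]
  exact (S.SA4 m hm a ha h0 h1).2

private lemma zero_comm_of_nonneg' {m a : R} (hm : m ∈ S.A) (ha : a ∈ S.A) (h0 : S.le 0 a)
    (h : a * m = 0) : m * a = 0 := by
  have h1 : m * a * m = 0 := by rw [mul_assoc, h, mul_zero]
  exact (S.SA4 m hm a ha h0 h1).1

end SynapticAlgebra

end Aux

section Aux2
set_option linter.unusedSectionVars false

variable {R : Type*} [Ring R] [Algebra ℝ R]

namespace SynapticAlgebra

variable (S : SynapticAlgebra R)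

/-- Carrier projection of a nonnegative element, with two-sided absorption. -/
private lemma carrier {a : R} (ha : a ∈ S.A) (h0 : S.le 0 a) :
    ∃ w ∈ S.A, w * w = w ∧ a * w = a ∧ w * a = a ∧ ∀ b ∈ S.A, (a * b = 0 ↔ w * b = 0) := by
  obtain ⟨w, hwA, hwi, hiff⟩ := S.SA6 a ha
  have h1w : w * (1 - w) = 0 := by rw [mul_sub, mul_one, hwi, sub_self]
  have ha1w : a * (1 - w) = 0 := (hiff (1 - w) (S.sub_mem S.one_mem hwA)).mpr h1w
  have haw : a * w = a := by
    rw [mul_sub, mul_one, sub_eq_zero] at ha1w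
    exact ha1w.symm
  have hwa : w * a = a := by
    have h2 : (1 - w) * a * (1 - w) = 0 := by
      rw [mul_assoc, mul_sub, mul_one, haw, sub_self, mul_zero]
    have h3 := (S.SA4 (1 - w) (S.sub_mem S.one_mem hwA) a ha h0 h2).1
    rw [sub_mul, one_mul, sub_eq_zero] at h3
    exact h3.symm
  exact ⟨w, hwA, hwi, haw, hwa, hiff⟩

/-- The carrier projection of `a ≥ 0` commutes with everything commuting with `a`. -/
private lemma carrier_comm {a w z : R} (hw : w ∈ S.A) (hz : z ∈ S.A)
    (hwi : w * w = w) (haw : a * w = a) (hwa : w * a = a)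
    (hiff : ∀ b ∈ S.A, (a * b = 0 ↔ w * b = 0)) (hcomm : a * z = z * a) :
    w * z = z * w := by
  have e1 : a * (z * w) = z * a := by rw [← mul_assoc, hcomm, mul_assoc, haw]
  have e2 : a * (w * z) = z * a := by rw [← mul_assoc, haw, hcomm]
  have k1 : a * (z * w + w * z - (z + z)) = 0 := by
    rw [mul_sub, mul_add, e1, e2, mul_add, hcomm, sub_self]
  have humem : z * w + w * z - (z + z) ∈ S.A :=
    S.sub_mem (S.jordan_mem hz hw) (S.add_mem hz hz)
  have k2 := (hiff _ humem).mp k1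
  rw [mul_sub, mul_add, ← mul_assoc, ← mul_assoc, hwi, mul_add] at k2
  have k3 : w * z * w + w * z = w * z + w * z := by
    rw [sub_eq_zero] at k2; exact k2
  have step1 : w * z * w = w * z := add_right_cancel k3
  have hw1w : w * (1 - w) = 0 := by rw [mul_sub, mul_one, hwi, sub_self]
  have t0 : w * z * (1 - w) = 0 := by rw [mul_sub, mul_one, step1, sub_self]
  have tmem : w * z * (1 - w) + (1 - w) * z * w ∈ S.A :=
    S.triple3_mem hw hz (S.sub_mem S.one_mem hw)
  rw [t0, zero_add] at tmem
  have tsq : ((1 - w) * z * w) * ((1 - w) * z * w) = 0 := by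
    simp only [mul_assoc]
    rw [assoc_eq hw1w, zero_mul, mul_zero, mul_zero]
  have tz := S.sq_zero tmem tsq
  rw [sub_mul, sub_mul, one_mul, step1, sub_eq_zero] at tz
  exact tz.symm

end SynapticAlgebra

end Aux2

section Aux3
set_option linter.unusedSectionVars false
set_option maxHeartbeats 1000000

variable {R : Type*} [Ring R] [Algebra ℝ R]

namespace SynapticAlgebra

variable (S : SynapticAlgebra R)

/-- Key lemma: if `e` and `v` are complementary projections, then some symmetry
exchanges `e` and `1 - v`. -/
private lemma exchange_of_compl {e v : R} (he : e ∈ S.Proj) (hv : v ∈ S.Proj)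
    (hmeet : S.IsMeet e v 0) (hjoin : S.IsJoin e v 1) :
    ∃ s, S.IsSymmetry s ∧ s * e * s = 1 - v := by
  obtain ⟨heA, hee⟩ := he
  obtain ⟨hvA, hvv⟩ := hv
  have heel : ∀ z : R, e * (e * z) = e * z := fun z => by rw [← mul_assoc, hee]
  have hvvl : ∀ z : R, v * (v * z) = v * z := fun z => by rw [← mul_assoc, hvv]
  obtain ⟨b, hb_def⟩ : ∃ b : R, b = e - v := ⟨_, rfl⟩
  obtain ⟨a, ha_def⟩ : ∃ a : R, a = e + v - 1 := ⟨_, rfl⟩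
  obtain ⟨c, hc_def⟩ : ∃ c : R, c = b * b := ⟨_, rfl⟩
  have hbA : b ∈ S.A := hb_def ▸ S.sub_mem heA hvA
  have haA : a ∈ S.A := ha_def ▸ S.sub_mem (S.add_mem heA hvA) S.one_mem
  have hcA : c ∈ S.A := hc_def ▸ S.sq_mem b hbA
  have hc0 : S.le 0 c := hc_def ▸ S.sq_nonneg b hbA
  -- basic ring identities
  have hab : a * b + b * a = 0 := by
    rw [ha_def, hb_def]
    simp only [sub_mul, mul_sub, add_mul, mul_add, one_mul, mul_one, hee, hvv]
    abel
  have hba : b * a = -(a * b) := eq_neg_of_add_eq_zero_right hab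
  have hab' : a * b = -(b * a) := eq_neg_of_add_eq_zero_left hab
  have hac : a * c = c * a := by
    rw [hc_def]
    calc a * (b * b) = (a * b) * b := by rw [mul_assoc]
      _ = -(b * a) * b := by rw [hab']
      _ = -(b * (a * b)) := by rw [neg_mul, mul_assoc]
      _ = -(b * -(b * a)) := by rw [hab']
      _ = b * (b * a) := by rw [mul_neg, neg_neg]
      _ = (b * b) * a := by rw [mul_assoc]
  have hcexp : c = e + v - (e * v + v * e) := by
    rw [hc_def, hb_def]
    simp only [sub_mul, mul_sub, hee, hvv]
    abel
  have hec : e * c = c * e := by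
    rw [hcexp]
    simp only [mul_add, add_mul, mul_sub, sub_mul, mul_assoc, hee, hvv, heel, hvvl]
    abel
  have hvc : v * c = c * v := by
    rw [hcexp]
    simp only [mul_add, add_mul, mul_sub, sub_mul, mul_assoc, hee, hvv, heel, hvvl]
    abel
  -- carrier of c; complementarity forces it to be 1
  obtain ⟨w, hwA, hwi, hcw, hwc, hwiff⟩ := S.carrier hcA hc0
  obtain ⟨g, hg_def⟩ : ∃ g : R, g = 1 - w := ⟨_, rfl⟩
  have hgA : g ∈ S.A := hg_def ▸ S.sub_mem S.one_mem hwA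
  have hgi : g * g = g := by
    rw [hg_def]
    simp only [mul_sub, sub_mul, one_mul, mul_one, hwi]
    abel
  have hcg : c * g = 0 := by rw [hg_def, mul_sub, mul_one, hcw, sub_self]
  have hgc : g * c = 0 := S.zero_comm_of_nonneg' hgA hcA hc0 hcg
  have hbbc : ∀ z : R, b * (b * z) = c * z := fun z => by rw [← mul_assoc, ← hc_def]
  have hbgb : b * g * b = 0 := by
    apply S.sq_zero (S.triple_mem hbA hgA)
    simp only [mul_assoc]
    rw [hbbc, assoc_eq hgc, zero_mul, mul_zero]
  have hbg := S.SA4 b hbA g hgA (S.idem_nonneg hgA hgi) hbgb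
  have hwe : w * e = e * w := S.carrier_comm hwA heA hwi hcw hwc hwiff hec.symm
  have hwv : w * v = v * w := S.carrier_comm hwA hvA hwi hcw hwc hwiff hvc.symm
  have hge : g * e = e * g := by rw [hg_def, sub_mul, one_mul, mul_sub, mul_one, hwe]
  have hgv : g * v = v * g := by rw [hg_def, sub_mul, one_mul, mul_sub, mul_one, hwv]
  have hev_g : e * g = v * g := by
    have h1 := hbg.1
    rw [hb_def, sub_mul, sub_eq_zero] at h1
    exact h1
  -- r := e*g is a projection below both e and v, hence 0
  have hrval : e * g * e = e * g := by rw [mul_assoc, hge, ← mul_assoc, hee]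
  have hrA : e * g ∈ S.A := hrval ▸ S.triple_mem heA hgA
  have hridem : (e * g) * (e * g) = e * g := by
    have h1 : g * (e * g) = e * g := by rw [← mul_assoc, hge, mul_assoc, hgi]
    rw [mul_assoc, h1, ← mul_assoc, hee]
  have hler : S.le (e * g) e := by
    apply S.le_of_idem_diff hrA heA
    have k1 : e * (e * g) = e * g := heel g
    rw [sub_mul, mul_sub, mul_sub, hee, k1, hrval, hridem, sub_self, sub_zero]
  have hlerv : S.le (e * g) v := by
    apply S.le_of_idem_diff hrA hvA
    have k1 : v * (e * g) = e * g := by rw [hev_g]; exact hvvl g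
    have k2 : (e * g) * v = e * g := by
      rw [hev_g, mul_assoc, hgv, hvvl]
    rw [sub_mul, mul_sub, mul_sub, hvv, k1, k2, hridem, sub_self, sub_zero]
  have hr0 : e * g = 0 := by
    have h1 := hmeet.2.2.2 (e * g) ⟨hrA, hridem⟩ hler hlerv
    exact S.le_antisymm (e * g) hrA 0 S.zero_mem h1 (S.idem_nonneg hrA hridem)
  have hge0 : g * e = 0 := by rw [hge, hr0]
  have hvg0 : v * g = 0 := by rw [← hev_g, hr0]
  have hgv0 : g * v = 0 := by rw [hgv, hvg0]
  -- 1 - g is a projection above both e and v, hence 1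
  have hjA : (1 : R) - g ∈ S.A := S.sub_mem S.one_mem hgA
  have hji : ((1:R) - g) * (1 - g) = 1 - g := by
    simp only [mul_sub, sub_mul, one_mul, mul_one, hgi]
    abel
  have hlee : S.le e (1 - g) := by
    apply S.le_of_idem_diff heA hjA
    simp only [sub_mul, mul_sub, one_mul, mul_one, hee, hgi, hge0, hr0]
    abel
  have hlev : S.le v (1 - g) := by
    apply S.le_of_idem_diff hvA hjA
    simp only [sub_mul, mul_sub, one_mul, mul_one, hvv, hgi, hgv0, hvg0]
    abel
  have hg0 : g = 0 := by
    have h1 := hjoin.2.2.2 (1 - g) ⟨hjA, hji⟩ hlee hlev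
    have h2 : S.le (1 - g) 1 := by
      apply S.le_of_idem_diff hjA S.one_mem
      rw [sub_sub_cancel]
      exact hgi
    have h3 := S.le_antisymm (1 - g) hjA 1 S.one_mem h2 h1
    rwa [sub_eq_self] at h3
  have hw1 : w = 1 := by
    have h1 : (1 : R) - w = 0 := hg_def ▸ hg0
    rw [sub_eq_zero] at h1
    exact h1.symm
  have faithful : ∀ z ∈ S.A, c * z = 0 → z = 0 := by
    intro z hz hcz
    have := (hwiff z hz).mp hcz
    rwa [hw1, one_mul] at this
  -- square root of c, and the elements x, y
  obtain ⟨d, hdCC, hd0, hdd⟩ := S.SA5 c hcA hc0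
  have hdA : d ∈ S.A := hdCC.1
  have hdcomm : ∀ z, z ∈ S.A → z * c = c * z → d * z = z * d := by
    intro z hz hzc
    exact hdCC.2 z ⟨hz, fun b₀ hb₀ => by
      rw [Set.mem_singleton_iff] at hb₀; rw [hb₀]; exact hzc⟩
  have hdb : d * b = b * d := hdcomm b hbA (by rw [hc_def, mul_assoc])
  have hda : d * a = a * d := hdcomm a haA hac
  obtain ⟨x, hx_def⟩ : ∃ x : R, x = d + b := ⟨_, rfl⟩
  obtain ⟨y, hy_def⟩ : ∃ y : R, y = d - b := ⟨_, rfl⟩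
  have hxA : x ∈ S.A := hx_def ▸ S.add_mem hdA hbA
  have hyA : y ∈ S.A := hy_def ▸ S.sub_mem hdA hbA
  have hxy : x * y = 0 := by
    rw [hx_def, hy_def]
    simp only [add_mul, mul_sub]
    rw [hdd, hdb, ← hc_def]
    abel
  have hsum : x * x + y * y = c + c + (c + c) := by
    rw [hx_def, hy_def]
    simp only [add_mul, mul_add, sub_mul, mul_sub]
    rw [hdd, ← hc_def]
    abel
  have hx2A : x * x ∈ S.A := S.sq_mem x hxA
  have hy2A : y * y ∈ S.A := S.sq_mem y hyA
  have hx20 : S.le 0 (x * x) := S.sq_nonneg x hxA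
  have hy20 : S.le 0 (y * y) := S.sq_nonneg y hyA
  have hx2y2 : (x * x) * (y * y) = 0 := by
    rw [mul_assoc, ← mul_assoc x y y, hxy, zero_mul, mul_zero]
  -- carriers h and k of x² and y²
  obtain ⟨h, hhA, hhi, hx2h, hhx2, hhiff⟩ := S.carrier hx2A hx20
  obtain ⟨k, hkA, hki, hy2k, hky2, hkiff⟩ := S.carrier hy2A hy20
  have hy2h : h * (y * y) = 0 := (hhiff (y * y) hy2A).mp hx2y2
  have hy2h' : (y * y) * h = 0 := S.zero_comm_of_nonneg hhA hy2A hy20 hy2h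
  have hkh : k * h = 0 := (hkiff h hhA).mp hy2h'
  have hhk : h * k = 0 := S.zero_comm_of_nonneg hkA hhA (S.idem_nonneg hhA hhi) hkh
  have hhx : h * x = x * h := S.carrier_comm hhA hxA hhi hx2h hhx2 hhiff (mul_assoc x x x)
  have hky : k * y = y * k := S.carrier_comm hkA hyA hki hy2k hky2 hkiff (mul_assoc y y y)
  -- x = x*h, y = y*k
  have hxh1 : x * h = x := by
    have hu : (x - x * h) * (x - x * h) = 0 := by
      have k1 : x * (x * h) = x * x := by rw [← mul_assoc, hx2h]
      have k2 : (x * h) * x = x * x := by rw [mul_assoc, hhx, ← mul_assoc, hx2h]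
      have k3 : (x * h) * (x * h) = x * x := by
        rw [mul_assoc, ← mul_assoc h x h, hhx, mul_assoc, hhi, ← mul_assoc, hx2h]
      rw [sub_mul, mul_sub, mul_sub, k1, k2, k3, sub_self]
    have htA : x + x - (x * h + h * x) ∈ S.A :=
      S.sub_mem (S.add_mem hxA hxA) (S.jordan_mem hxA hhA)
    have hteq : x + x - (x * h + h * x) = (x - x * h) + (x - x * h) := by
      rw [← hhx]; abel
    have htsq : (x + x - (x * h + h * x)) * (x + x - (x * h + h * x)) = 0 := by
      rw [hteq]
      simp only [add_mul, mul_add, hu]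
      abel
    have ht0 := S.sq_zero htA htsq
    rw [hteq] at ht0
    have h0 : (x - x * h) + (x - x * h) = 0 + 0 := by rw [add_zero]; exact ht0
    have h1 := add_self_cancel h0
    rw [sub_eq_zero] at h1
    exact h1.symm
  have hhx1 : h * x = x := by rw [hhx, hxh1]
  have hyk1 : y * k = y := by
    have hu : (y - y * k) * (y - y * k) = 0 := by
      have k1 : y * (y * k) = y * y := by rw [← mul_assoc, hy2k]
      have k2 : (y * k) * y = y * y := by rw [mul_assoc, hky, ← mul_assoc, hy2k]
      have k3 : (y * k) * (y * k) = y * y := by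
        rw [mul_assoc, ← mul_assoc k y k, hky, mul_assoc, hki, ← mul_assoc, hy2k]
      rw [sub_mul, mul_sub, mul_sub, k1, k2, k3, sub_self]
    have htA : y + y - (y * k + k * y) ∈ S.A :=
      S.sub_mem (S.add_mem hyA hyA) (S.jordan_mem hyA hkA)
    have hteq : y + y - (y * k + k * y) = (y - y * k) + (y - y * k) := by
      rw [← hky]; abel
    have htsq : (y + y - (y * k + k * y)) * (y + y - (y * k + k * y)) = 0 := by
      rw [hteq]
      simp only [add_mul, mul_add, hu]
      abel
    have ht0 := S.sq_zero htA htsq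
    rw [hteq] at ht0
    have h0 : (y - y * k) + (y - y * k) = 0 + 0 := by rw [add_zero]; exact ht0
    have h1 := add_self_cancel h0
    rw [sub_eq_zero] at h1
    exact h1.symm
  have hky1 : k * y = y := by rw [hky, hyk1]
  have hhy0 : h * y = 0 := by rw [← hky1, ← mul_assoc, hhk, zero_mul]
  have hyh0 : y * h = 0 := by rw [← hyk1, mul_assoc, hkh, mul_zero]
  -- h + k = 1
  have hx2k : (x * x) * k = 0 := by rw [← hx2h, mul_assoc, hhk, mul_zero]
  have hy2h0 : (y * y) * h = 0 := hy2h'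
  have hx2m : (x * x) * (1 - h - k) = 0 := by
    rw [mul_sub, mul_sub, mul_one, hx2h, hx2k, sub_self, sub_zero]
  have hy2m : (y * y) * (1 - h - k) = 0 := by
    rw [mul_sub, mul_sub, mul_one, hy2h0, hy2k, sub_zero, sub_self]
  have hcm : c * (1 - h - k) = 0 := by
    have hsum0 : (x * x) * (1 - h - k) + (y * y) * (1 - h - k) = 0 := by
      rw [hx2m, hy2m, add_zero]
    rw [← add_mul, hsum] at hsum0
    simp only [add_mul] at hsum0
    have h4 : (c * (1 - h - k) + c * (1 - h - k)) + (c * (1 - h - k) + c * (1 - h - k))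
        = 0 + 0 := by rw [add_zero]; exact hsum0
    have h2 := add_self_cancel h4
    have h1 : c * (1 - h - k) + c * (1 - h - k) = 0 + 0 := by rw [add_zero]; exact h2
    exact add_self_cancel h1
  have hmA : (1 : R) - h - k ∈ S.A := S.sub_mem (S.sub_mem S.one_mem hhA) hkA
  have hm0 : (1 : R) - h - k = 0 := faithful _ hmA hcm
  have hk_eq : k = 1 - h := by
    rw [sub_sub, sub_eq_zero] at hm0
    exact eq_sub_of_add_eq' hm0.symm
  -- relations between a and x, y
  have hxa : x * a = a * y := by
    rw [hx_def, hy_def, add_mul, mul_sub, hda, hba]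
    abel
  have hax : a * x = y * a := by
    rw [hx_def, hy_def, mul_add, sub_mul, hda, hba]
    abel
  have hx2a : (x * x) * a = a * (y * y) := by
    rw [mul_assoc, hxa, ← mul_assoc, hxa, mul_assoc]
  have hy2a : (y * y) * a = a * (x * x) := by
    rw [mul_assoc, hax.symm, ← mul_assoc, hax.symm, mul_assoc]
  -- h a h = 0 and (1-h) a (1-h) = 0
  have hah : h * a * h = 0 := by
    have hz : (x * x) * (h * a * h) = 0 := by
      rw [← mul_assoc, ← mul_assoc, hx2h, hx2a, mul_assoc, hy2h', mul_zero]
    have h1 := (hhiff (h * a * h) (S.triple_mem hhA haA)).mp hz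
    rw [← mul_assoc, ← mul_assoc, hhi] at h1
    exact h1
  have hkak : k * a * k = 0 := by
    have hz : (y * y) * (k * a * k) = 0 := by
      rw [← mul_assoc, ← mul_assoc, hy2k, hy2a, mul_assoc, hx2k, mul_zero]
    have h1 := (hkiff (k * a * k) (S.triple_mem hkA haA)).mp hz
    rw [← mul_assoc, ← mul_assoc, hki] at h1
    exact h1
  have I1 : h * a + a * h = a := by
    rw [hk_eq] at hkak
    have h2 : a - a * h - h * a = 0 := by
      have expand : (1 - h) * a * (1 - h) = a - a * h - h * a + h * a * h := by
        simp only [sub_mul, mul_sub, one_mul, mul_one]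
        abel
      rw [expand, hah, add_zero] at hkak
      exact hkak
    have h3 : h * a + a * h - a = -(a - a * h - h * a) := by abel
    rw [← sub_eq_zero, h3, h2, neg_zero]
  -- the symmetry s = 2h - 1
  obtain ⟨s, hs_def⟩ : ∃ s : R, s = h + h - 1 := ⟨_, rfl⟩
  have hsA : s ∈ S.A := hs_def ▸ S.sub_mem (S.add_mem hhA hhA) S.one_mem
  have hs2 : s * s = 1 := by
    rw [hs_def]
    simp only [sub_mul, mul_sub, add_mul, mul_add, one_mul, mul_one, hhi]
    abel
  have hsas : s * a * s = -a := by
    have e1 : s * a * s = a - (h * a + a * h) - (h * a + a * h) := by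
      rw [hs_def]
      simp only [sub_mul, mul_sub, add_mul, mul_add, one_mul, mul_one, hah]
      abel
    rw [e1, I1]
    abel
  have hbb : b + b = x - y := by rw [hx_def, hy_def]; abel
  have hhbb : h * (b + b) = x := by rw [hbb, mul_sub, hhx1, hhy0, sub_zero]
  have hbbh : (b + b) * h = x := by rw [hbb, sub_mul, hxh1, hyh0, sub_zero]
  have hsb : s * b = x - b := by
    rw [hs_def, sub_mul, add_mul, one_mul, ← mul_add, hhbb]
  have hbs : b * s = x - b := by
    rw [hs_def, mul_sub, mul_add, mul_one, ← add_mul, hbbh]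
  have hxs : x * s = x := by
    rw [hs_def, mul_sub, mul_add, mul_one, hxh1]
    abel
  have hsbs : s * b * s = b := by
    rw [hsb, sub_mul, hxs, hbs]
    abel
  have hepe : e + e = 1 + a + b := by rw [ha_def, hb_def]; abel
  have hdist : s * (e + e) * s = s * e * s + s * e * s := by
    simp only [mul_add, add_mul]
  have key : s * (e + e) * s = (1 - v) + (1 - v) := by
    have k1 : s * (e + e) * s = s * 1 * s + s * a * s + s * b * s := by
      rw [hepe]
      simp only [mul_add, add_mul]
    rw [k1, mul_one, hs2, hsas, hsbs, ha_def, hb_def]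
    abel
  have final : s * e * s = 1 - v := by
    have h1 : s * e * s + s * e * s = (1 - v) + (1 - v) := by
      rw [← hdist]; exact key
    exact add_self_cancel h1
  exact ⟨s, ⟨hsA, hs2⟩, final⟩

/-- Part (ii): orthogonal projections exchanged by two symmetries are exchanged
by a single symmetry. -/
private lemma single_of_double {e f s₁ s₂ : R} (he : e ∈ S.Proj) (hf : f ∈ S.Proj)
    (hef : e * f = 0) (hfe : f * e = 0) (hs₁ : S.IsSymmetry s₁) (hs₂ : S.IsSymmetry s₂)
    (hx : s₂ * (s₁ * e * s₁) * s₂ = f) : ∃ s, S.IsSymmetry s ∧ s * e * s = f := by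
  obtain ⟨heA, hee⟩ := he
  obtain ⟨hfA, hff⟩ := hf
  obtain ⟨h1A, h11⟩ := hs₁
  obtain ⟨h2A, h22⟩ := hs₂
  have hs1l : ∀ z : R, s₁ * (s₁ * z) = z := fun z => by rw [← mul_assoc, h11, one_mul]
  have hs2l : ∀ z : R, s₂ * (s₂ * z) = z := fun z => by rw [← mul_assoc, h22, one_mul]
  obtain ⟨g, hg_def⟩ : ∃ g : R, g = s₁ * e * s₁ := ⟨_, rfl⟩
  have hgA : g ∈ S.A := hg_def ▸ S.triple_mem h1A heA
  have heel : ∀ z : R, e * (e * z) = e * z := fun z => by rw [← mul_assoc, hee]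
  have hgg : g * g = g := by
    rw [hg_def]
    simp only [mul_assoc, hs1l, heel]
  have hggl : ∀ z : R, g * (g * z) = g * z := fun z => by rw [← mul_assoc, hgg]
  have hgs₁ : g * s₁ = s₁ * e := by rw [hg_def, mul_assoc, h11, mul_one]
  have hs₁g : s₁ * g = e * s₁ := by rw [hg_def, ← mul_assoc, ← mul_assoc, h11, one_mul]
  have hf2 : s₂ * g * s₂ = f := by rw [hg_def]; exact hx
  obtain ⟨w, hw_def⟩ : ∃ w : R, w = s₂ * g * s₁ := ⟨_, rfl⟩
  obtain ⟨w', hw'_def⟩ : ∃ w' : R, w' = s₁ * g * s₂ := ⟨_, rfl⟩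
  have hs2f : s₂ * f = g * s₂ := by
    rw [← hf2]
    simp only [mul_assoc, hs2l]
  have hfs2 : f * s₂ = s₂ * g := by
    rw [← hf2]
    simp only [mul_assoc, h22, mul_one]
  have hww' : w * w' = f := by
    rw [hw_def, hw'_def]
    simp only [mul_assoc, hs1l, hggl]
    rw [← mul_assoc]
    exact hf2
  have hw'w : w' * w = e := by
    rw [hw_def, hw'_def]
    simp only [mul_assoc, hs2l, hggl]
    rw [hgs₁, hs1l]
  have hwe : w * e = w := by
    rw [hw_def]
    simp only [mul_assoc]
    rw [← hgs₁]
    simp only [← mul_assoc, hgg]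
  have hfw : f * w = w := by
    rw [hw_def, ← hf2]
    simp only [mul_assoc, hs2l, hggl]
  have hew0 : e * w = 0 := by rw [← hfw, ← mul_assoc, hef, zero_mul]
  have hwf0 : w * f = 0 := by rw [← hwe, mul_assoc, hef, mul_zero]
  have hew' : e * w' = w' := by
    rw [hw'_def]
    simp only [← mul_assoc]
    rw [← hs₁g]
    simp only [mul_assoc, hggl]
  have hw'f : w' * f = w' := by
    rw [hw'_def]
    simp only [mul_assoc]
    rw [hs2f]
    simp only [← mul_assoc, hgg]
  have hfw'0 : f * w' = 0 := by rw [← hew', ← mul_assoc, hfe, zero_mul]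
  have hw'e0 : w' * e = 0 := by rw [← hw'f, mul_assoc, hfe, mul_zero]
  have hww0 : w * w = 0 := by
    calc w * w = (w * e) * (f * w) := by rw [hwe, hfw]
      _ = w * ((e * f) * w) := by simp only [mul_assoc]
      _ = 0 := by rw [hef, zero_mul, mul_zero]
  have hw'w'0 : w' * w' = 0 := by
    calc w' * w' = (w' * f) * (e * w') := by rw [hw'f, hew']
      _ = w' * ((f * e) * w') := by simp only [mul_assoc]
      _ = 0 := by rw [hfe, zero_mul, mul_zero]
  obtain ⟨s, hs_def⟩ : ∃ s : R, s = w + w' + (1 - e - f) := ⟨_, rfl⟩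
  have hsA : s ∈ S.A := by
    rw [hs_def]
    apply S.add_mem
    · rw [hw_def, hw'_def]
      exact S.triple3_mem h2A hgA h1A
    · exact S.sub_mem (S.sub_mem S.one_mem heA) hfA
  have hss : s * s = 1 := by
    rw [hs_def]
    simp only [add_mul, mul_add, sub_mul, mul_sub, one_mul, mul_one, hww0, hww', hw'w,
      hw'w'0, hwe, hew0, hwf0, hfw, hew', hw'e0, hw'f, hfw'0, hee, hff, hef, hfe]
    abel
  have hse : s * e = w := by
    rw [hs_def]
    simp only [add_mul, sub_mul, one_mul, hwe, hw'e0, hee, hfe]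
    abel
  have hws : w * s = f := by
    rw [hs_def]
    simp only [mul_add, mul_sub, mul_one, hww0, hww', hwe, hwf0]
    abel
  refine ⟨s, ⟨hsA, hss⟩, ?_⟩
  rw [hse, hws]

end SynapticAlgebra

end Aux3

/-- Theorem 5.12: (i) perspective projections satisfy `s₂s₁es₁s₂ = f` for some
symmetries `s₁, s₂`; (ii) if moreover `e ⊥ f` and `s₂s₁es₁s₂ = f` for some
symmetries, then a single symmetry exchanges `e` and `f`; (iii) projections
that are both perspective and orthogonal are exchanged by a symmetry. -/
theorem stmt11 {R : Type*} [Ring R] [Algebra ℝ R] (S : SynapticAlgebra R)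
    (e f : R) (he : e ∈ S.Proj) (hf : f ∈ S.Proj) :
    ((∃ v ∈ S.Proj, S.IsMeet e v 0 ∧ S.IsJoin e v 1 ∧
        S.IsMeet f v 0 ∧ S.IsJoin f v 1) →
      ∃ s₁ s₂, S.IsSymmetry s₁ ∧ S.IsSymmetry s₂ ∧
        s₂ * (s₁ * e * s₁) * s₂ = f) ∧
    ((e * f = 0 ∧ f * e = 0) →
      (∃ s₁ s₂, S.IsSymmetry s₁ ∧ S.IsSymmetry s₂ ∧
        s₂ * (s₁ * e * s₁) * s₂ = f) →
      ∃ s, S.IsSymmetry s ∧ s * e * s = f) ∧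
    (((∃ v ∈ S.Proj, S.IsMeet e v 0 ∧ S.IsJoin e v 1 ∧
        S.IsMeet f v 0 ∧ S.IsJoin f v 1) ∧ e * f = 0 ∧ f * e = 0) →
      ∃ s, S.IsSymmetry s ∧ s * e * s = f) := by
  have part1 : (∃ v ∈ S.Proj, S.IsMeet e v 0 ∧ S.IsJoin e v 1 ∧
      S.IsMeet f v 0 ∧ S.IsJoin f v 1) →
      ∃ s₁ s₂, S.IsSymmetry s₁ ∧ S.IsSymmetry s₂ ∧
        s₂ * (s₁ * e * s₁) * s₂ = f := by
    rintro ⟨v, hv, hm1, hj1, hm2, hj2⟩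
    obtain ⟨s₁, hsym₁, h1⟩ := S.exchange_of_compl he hv hm1 hj1
    obtain ⟨s₂, hsym₂, h2⟩ := S.exchange_of_compl hf hv hm2 hj2
    refine ⟨s₁, s₂, hsym₁, hsym₂, ?_⟩
    have h22 : s₂ * s₂ = 1 := hsym₂.2
    have hs2l : ∀ z : R, s₂ * (s₂ * z) = z := fun z => by rw [← mul_assoc, h22, one_mul]
    rw [h1, ← h2]
    simp only [mul_assoc, hs2l, h22, mul_one]
  have part2 : (e * f = 0 ∧ f * e = 0) →
      (∃ s₁ s₂, S.IsSymmetry s₁ ∧ S.IsSymmetry s₂ ∧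
        s₂ * (s₁ * e * s₁) * s₂ = f) →
      ∃ s, S.IsSymmetry s ∧ s * e * s = f := by
    rintro ⟨hef, hfe⟩ ⟨s₁, s₂, hsym₁, hsym₂, hx⟩
    exact S.single_of_double he hf hef hfe hsym₁ hsym₂ hx
  exact ⟨part1, part2, fun ⟨hpersp, horth⟩ => part2 horth (part1 hpersp)⟩
end
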